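/- arXiv:1906.10933 — 2 statements merged into one kernel-verified Lean document; each statement's English description precedes it below -/
import Mathlib

section
/- Let X = X_1×…×X_d be an admissible space of d-dimensional random vectors and E an admissible space of random variables. Suppose S : X → E is monotone, concave, surplus invariant (S(X) = S(min(X,0)) for every X ∈ X, where the minimum is taken componentwise), and has the Fatou property (for every sequence (X^n) ⊂ X and X ∈ X with X^n → X almost surely and sup_n |X^n| ∈ X, one has S(X) ≥ limsup_{n→∞} S(X^n)). Then for every W ∈ E'_+ the functional X ↦ E[S(X)W] is upper semicontinuous with respect to σ(X,X'). -/
open MeasureTheory Filter Set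
open scoped ENNReal

noncomputable section

namespace SystemicRisk

variable {Ω : Type*} [MeasurableSpace Ω]

/-- A random variable is essentially bounded. -/
def EssBdd {μ : Measure Ω} (f : Ω →ₘ[μ] ℝ) : Prop :=
  ∃ C : ℝ, ∀ᵐ ω ∂μ, |f ω| ≤ C

/-- The scalar pairing `E[U W]`. -/
def ip {μ : Measure Ω} (U W : Ω →ₘ[μ] ℝ) : ℝ := ∫ ω, U ω * W ω ∂μ

/-- The Köthe dual of a set of random variables. -/
def kdual {μ : Measure Ω} (L : Set (Ω →ₘ[μ] ℝ)) : Set (Ω →ₘ[μ] ℝ) :=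
  {Z | ∀ f ∈ L, Integrable (fun ω => f ω * Z ω) μ}

/-- `nrm` is a Banach lattice norm on `L` (w.r.t. the a.s. order). -/
structure IsBLNorm {μ : Measure Ω} (L : Set (Ω →ₘ[μ] ℝ)) (nrm : (Ω →ₘ[μ] ℝ) → ℝ) : Prop where
  nonneg : ∀ f ∈ L, 0 ≤ nrm f
  eq_zero_iff : ∀ f ∈ L, (nrm f = 0 ↔ f = 0)
  smul_eq : ∀ f ∈ L, ∀ c : ℝ, nrm (c • f) = |c| * nrm f
  triangle : ∀ f ∈ L, ∀ g ∈ L, nrm (f + g) ≤ nrm f + nrm g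
  solid : ∀ f ∈ L, ∀ g ∈ L, |f| ≤ |g| → nrm f ≤ nrm g
  complete : ∀ u : ℕ → (Ω →ₘ[μ] ℝ), (∀ n, u n ∈ L) →
      (∀ ε : ℝ, 0 < ε → ∃ N : ℕ, ∀ m ≥ N, ∀ n ≥ N, nrm (u m - u n) < ε) →
      ∃ f ∈ L, ∀ ε : ℝ, 0 < ε → ∃ N : ℕ, ∀ n ≥ N, nrm (u n - f) < ε

/-- `L` is an admissible space: a linear subspace of `L^0` which is a Banach lattice
(for the a.s. order, with norm `nrm`) satisfying `L^∞ ⊆ L ⊆ L^1`. -/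
structure IsAdmissible {μ : Measure Ω} (L : Set (Ω →ₘ[μ] ℝ)) (nrm : (Ω →ₘ[μ] ℝ) → ℝ) : Prop where
  zero_mem : (0 : Ω →ₘ[μ] ℝ) ∈ L
  add_mem : ∀ f ∈ L, ∀ g ∈ L, f + g ∈ L
  smul_mem : ∀ (c : ℝ), ∀ f ∈ L, c • f ∈ L
  sup_mem : ∀ f ∈ L, ∀ g ∈ L, f ⊔ g ∈ L
  inf_mem : ∀ f ∈ L, ∀ g ∈ L, f ⊓ g ∈ L
  linfty_subset : ∀ f, EssBdd f → f ∈ L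
  subset_lone : ∀ f ∈ L, Integrable f μ
  banach : IsBLNorm L nrm

variable {d : ℕ}

/-- The product space `X = X_1 × ⋯ × X_d`. -/
def prodSet {μ : Measure Ω} (Li : Fin d → Set (Ω →ₘ[μ] ℝ)) : Set (Fin d → (Ω →ₘ[μ] ℝ)) :=
  {X | ∀ i, X i ∈ Li i}

/-- The vector pairing `E[⟨X,Z⟩] = ∑ i, E[X_i Z_i]`. -/
def pairing {μ : Measure Ω} (X Z : Fin d → (Ω →ₘ[μ] ℝ)) : ℝ := ∑ i, ip (X i) (Z i)

/-- The constant random vector associated with `m ∈ ℝ^d`. -/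
def cvec (μ : Measure Ω) (m : Fin d → ℝ) : Fin d → (Ω →ₘ[μ] ℝ) :=
  fun i => (AEEqFun.const Ω (m i) : Ω →ₘ[μ] ℝ)

/-- The weak topology `σ(P, D)` on a set of random vectors `P` induced by the pairing
with elements of `D`. -/
def wtop {μ : Measure Ω} (P D : Set (Fin d → (Ω →ₘ[μ] ℝ))) : TopologicalSpace ↥P :=
  TopologicalSpace.induced
    (fun X : ↥P => fun Z : ↥D => pairing (X : Fin d → (Ω →ₘ[μ] ℝ)) (Z : Fin d → (Ω →ₘ[μ] ℝ)))
    Pi.topologicalSpace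

/-- The weak topology `σ(P, D)` on a set of random variables `P` induced by the pairing
with elements of `D`. -/
def wtop1 {μ : Measure Ω} (P D : Set (Ω →ₘ[μ] ℝ)) : TopologicalSpace ↥P :=
  TopologicalSpace.induced
    (fun U : ↥P => fun W : ↥D => ip (U : Ω →ₘ[μ] ℝ) (W : Ω →ₘ[μ] ℝ))
    Pi.topologicalSpace

/-- An admissible impact map `S : X → E`. -/
structure IsAdmissibleImpact {μ : Measure Ω} (XX XX' : Set (Fin d → (Ω →ₘ[μ] ℝ)))
    (EE EE' : Set (Ω →ₘ[μ] ℝ)) (S : (Fin d → (Ω →ₘ[μ] ℝ)) → (Ω →ₘ[μ] ℝ)) : Prop where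
  mapsTo : ∀ X ∈ XX, S X ∈ EE
  nonconst : ∃ X ∈ XX, ∃ Y ∈ XX, S X ≠ S Y
  normalized : S 0 = 0
  mono : ∀ X ∈ XX, ∀ Y ∈ XX, X ≤ Y → S X ≤ S Y
  concave : ∀ X ∈ XX, ∀ Y ∈ XX, ∀ t : ℝ, 0 ≤ t → t ≤ 1 →
      t • S X + (1 - t) • S Y ≤ S (t • X + (1 - t) • Y)
  usc : ∀ W ∈ EE', (0 : Ω →ₘ[μ] ℝ) ≤ W →
      @UpperSemicontinuous (↥XX) ℝ (wtop XX XX') _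
        (fun X : ↥XX => ∫ ω, S (X : Fin d → (Ω →ₘ[μ] ℝ)) ω * W ω ∂μ)

/-- An admissible acceptance set `A ⊆ E` (relative to the impact map `S`). -/
structure IsAdmissibleAcceptance {μ : Measure Ω} (XX : Set (Fin d → (Ω →ₘ[μ] ℝ)))
    (EE EE' : Set (Ω →ₘ[μ] ℝ)) (S : (Fin d → (Ω →ₘ[μ] ℝ)) → (Ω →ₘ[μ] ℝ))
    (A : Set (Ω →ₘ[μ] ℝ)) : Prop where
  subset : A ⊆ EE
  preimage_nonempty : ∃ X ∈ XX, S X ∈ A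
  preimage_proper : ∃ X ∈ XX, S X ∉ A
  zero_mem : (0 : Ω →ₘ[μ] ℝ) ∈ A
  mono : ∀ U ∈ A, ∀ V ∈ EE, (0 : Ω →ₘ[μ] ℝ) ≤ V → U + V ∈ A
  convex : ∀ U ∈ A, ∀ V ∈ A, ∀ t : ℝ, 0 ≤ t → t ≤ 1 → t • U + (1 - t) • V ∈ A
  closed : @IsClosed (↥EE) (wtop1 EE EE') {U : ↥EE | (U : Ω →ₘ[μ] ℝ) ∈ A}

/-- The systemic acceptance set `S⁻¹(A) = {X ∈ X : S(X) ∈ A}`. -/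
def sysAcc {μ : Measure Ω} (XX : Set (Fin d → (Ω →ₘ[μ] ℝ)))
    (S : (Fin d → (Ω →ₘ[μ] ℝ)) → (Ω →ₘ[μ] ℝ)) (A : Set (Ω →ₘ[μ] ℝ)) :
    Set (Fin d → (Ω →ₘ[μ] ℝ)) :=
  {X ∈ XX | S X ∈ A}

/-- The "first allocate, then aggregate" systemic risk measure `ρ`. -/
def rho (μ : Measure Ω) (S : (Fin d → (Ω →ₘ[μ] ℝ)) → (Ω →ₘ[μ] ℝ)) (A : Set (Ω →ₘ[μ] ℝ))
    (X : Fin d → (Ω →ₘ[μ] ℝ)) : EReal :=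
  ⨅ m ∈ {m : Fin d → ℝ | S (X + cvec μ m) ∈ A}, ((∑ i, m i : ℝ) : EReal)

/-- The (lower) support function of a set of random vectors. -/
def suppV {μ : Measure Ω} (B : Set (Fin d → (Ω →ₘ[μ] ℝ))) (Z : Fin d → (Ω →ₘ[μ] ℝ)) : EReal :=
  ⨅ X ∈ B, ((pairing X Z : ℝ) : EReal)

/-- The barrier cone of a set of random vectors, inside the dual set `D`. -/
def barrV {μ : Measure Ω} (B D : Set (Fin d → (Ω →ₘ[μ] ℝ))) : Set (Fin d → (Ω →ₘ[μ] ℝ)) :=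
  {Z ∈ D | ⊥ < suppV B Z}

/-- The (lower) support function of a set of random variables. -/
def suppS {μ : Measure Ω} (A : Set (Ω →ₘ[μ] ℝ)) (W : Ω →ₘ[μ] ℝ) : EReal :=
  ⨅ U ∈ A, ((ip U W : ℝ) : EReal)

/-- The barrier cone of a set of random variables, inside the dual set `D`. -/
def barrS {μ : Measure Ω} (A D : Set (Ω →ₘ[μ] ℝ)) : Set (Ω →ₘ[μ] ℝ) :=
  {W ∈ D | ⊥ < suppS A W}

/-- The generic penalty function with dual variables `W` ranging over `K`. -/
def penalty {μ : Measure Ω} (XX : Set (Fin d → (Ω →ₘ[μ] ℝ)))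
    (A : Set (Ω →ₘ[μ] ℝ)) (S : (Fin d → (Ω →ₘ[μ] ℝ)) → (Ω →ₘ[μ] ℝ))
    (K : Set (Ω →ₘ[μ] ℝ)) (Z : Fin d → (Ω →ₘ[μ] ℝ)) : EReal :=
  ⨆ W ∈ K, (suppS A W +
    ⨅ X ∈ XX, ((pairing X Z - ∫ ω, S X ω * W ω ∂μ : ℝ) : EReal))

/-- a.s. strictly positive random variables. -/
def strictPos (μ : Measure Ω) : Set (Ω →ₘ[μ] ℝ) := {W | ∀ᵐ ω ∂μ, 0 < W ω}

/-- The penalty function `α`. -/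
def alpha {μ : Measure Ω} (XX : Set (Fin d → (Ω →ₘ[μ] ℝ))) (EE' : Set (Ω →ₘ[μ] ℝ))
    (A : Set (Ω →ₘ[μ] ℝ)) (S : (Fin d → (Ω →ₘ[μ] ℝ)) → (Ω →ₘ[μ] ℝ)) :
    (Fin d → (Ω →ₘ[μ] ℝ)) → EReal :=
  penalty XX A S (barrS A EE')

/-- The penalty function `α⁺`. -/
def alphaPlus {μ : Measure Ω} (XX : Set (Fin d → (Ω →ₘ[μ] ℝ))) (EE' : Set (Ω →ₘ[μ] ℝ))
    (A : Set (Ω →ₘ[μ] ℝ)) (S : (Fin d → (Ω →ₘ[μ] ℝ)) → (Ω →ₘ[μ] ℝ)) :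
    (Fin d → (Ω →ₘ[μ] ℝ)) → EReal :=
  penalty XX A S (barrS A EE' ∩ (strictPos μ ∪ {0}))

/-- a.s. strictly positive random vectors. -/
def strictPosV (μ : Measure Ω) (d : ℕ) : Set (Fin d → (Ω →ₘ[μ] ℝ)) :=
  {Z | ∀ i, ∀ᵐ ω ∂μ, 0 < Z i ω}

/-- The set `C` of nonnegative dual vectors with all components of expectation one. -/
def Cset {μ : Measure Ω} (XX' : Set (Fin d → (Ω →ₘ[μ] ℝ))) : Set (Fin d → (Ω →ₘ[μ] ℝ)) :=
  {Z ∈ XX' | (∀ i, (0 : Ω →ₘ[μ] ℝ) ≤ Z i) ∧ ∀ i, (∫ ω, Z i ω ∂μ) = 1}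

/-- A map with values in `[−∞,∞]` is proper on `P` if it never attains `−∞` on `P`
and is finite somewhere on `P`. -/
def ProperOn {β : Type*} (P : Set β) (f : β → EReal) : Prop :=
  (∀ x ∈ P, f x ≠ ⊥) ∧ ∃ x ∈ P, f x ≠ ⊤

/-- The positive part of an extended real number, as an extended nonnegative real. -/
def epos (x : EReal) : ℝ≥0∞ := if x = ⊤ then ⊤ else ENNReal.ofReal x.toReal

/-- The integral of an extended-real-valued function. -/
def eintegral (μ : Measure Ω) (g : Ω → EReal) : EReal :=
  ((∫⁻ ω, epos (g ω) ∂μ : ℝ≥0∞) : EReal) - ((∫⁻ ω, epos (-(g ω)) ∂μ : ℝ≥0∞) : EReal)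


/-- `sup_n |g n|` belongs to the space `L`. -/
def supAbsMem {μ : Measure Ω} (L : Set (Ω →ₘ[μ] ℝ)) (g : ℕ → (Ω →ₘ[μ] ℝ)) : Prop :=
  ∃ M ∈ L, ∀ᵐ ω ∂μ, BddAbove (Set.range fun n => |g n ω|) ∧ M ω = ⨆ n, |g n ω|

/-!
Write `φ(X) = E[S(X) W]`. By monotonicity and concavity of `S` and `W ≥ 0`, `φ` is monotone and
concave, so its superlevel sets `{φ ≥ c}` are convex. Since `X ⊆ (L¹)^d` and `(L¹)* = L^∞ ⊆ X'`,
Hahn–Banach puts a point `X₀` of the `σ(X,X')`-closure of `{φ ≥ c}` into its `L¹`-closure, so `X₀`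
is the a.s. limit of a sequence `Xⁿ` with `φ(Xⁿ) ≥ c`. Surplus invariance lets us replace `Xⁿ` by
`Zⁿ = (Xⁿ ∧ 0) ∨ (X₀ ∧ 0)`: still `φ(Zⁿ) ≥ φ(Xⁿ ∧ 0) = φ(Xⁿ) ≥ c`, and now `|Zⁿ| ≤ |X₀ ∧ 0| ∈ X`
with `Zⁿ → X₀ ∧ 0` a.s. The Fatou property and monotonicity squeeze `S(Zⁿ)` between `S(X₀ ∧ 0)`
and `S(0)` and force `S(Zⁿ) → S(X₀ ∧ 0)` a.s., so by dominated convergence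
`φ(X₀) = φ(X₀ ∧ 0) = lim φ(Zⁿ) ≥ c`.
-/

open scoped Topology

section L1Dual

variable {μ : Measure Ω} [IsFiniteMeasure μ]

def L2ToL1 (μ : Measure Ω) [IsFiniteMeasure μ] : Lp ℝ 2 μ →L[ℝ] Lp ℝ 1 μ :=
  LinearMap.mkContinuous
    { toFun := fun f => ⟨f, Lp.antitone one_le_two f.2⟩
      map_add' := fun _ _ => rfl
      map_smul' := fun _ _ => rfl }
    (μ.real univ ^ (1 / 2 : ℝ)) fun f => by
      rw [LinearMap.coe_mk, AddHom.coe_mk, Lp.norm_def, Lp.norm_def, mul_comm, measureReal_def,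
        ENNReal.toReal_rpow, ← ENNReal.toReal_mul]
      refine ENNReal.toReal_mono (ENNReal.mul_ne_top (Lp.eLpNorm_ne_top f) (by simp)) ?_
      convert eLpNorm_le_eLpNorm_mul_rpow_measure_univ one_le_two (Lp.aestronglyMeasurable f)
        using 3
      norm_num

lemma denseRange_L2ToL1 : DenseRange (L2ToL1 μ) := by
  refine (Lp.simpleFunc.denseRange (E := ℝ) (μ := μ) ENNReal.one_ne_top).mono ?_
  rintro _ ⟨q, rfl⟩
  obtain ⟨s, hs⟩ := q.2
  have h2 : ((q : Lp ℝ 1 μ) : Ω →ₘ[μ] ℝ) ∈ Lp ℝ 2 μ := by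
    rw [← hs, Lp.mem_Lp_iff_memLp]
    exact (s.memLp_of_isFiniteMeasure 2 μ).ae_eq (AEEqFun.coeFn_mk _ _).symm
  exact ⟨⟨_, h2⟩, rfl⟩

lemma ae_abs_le_of_abs_setIntegral_le {y : Ω → ℝ} (hy : Integrable y μ) {C : ℝ}
    (h : ∀ s, MeasurableSet s → μ s < ∞ → |∫ ω in s, y ω ∂μ| ≤ C * μ.real s) :
    ∀ᵐ ω ∂μ, |y ω| ≤ C := by
  have hC := integrable_const (μ := μ) C
  have hup : y ≤ᵐ[μ] fun _ => C := ae_le_of_forall_setIntegral_le hy hC fun s hs hμs => by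
    simpa [setIntegral_const, mul_comm] using (abs_le.1 (h s hs hμs)).2
  have hlow : (fun _ => -C) ≤ᵐ[μ] y := ae_le_of_forall_setIntegral_le hC.neg hy fun s hs hμs => by
    simpa [setIntegral_const, mul_comm] using (abs_le.1 (h s hs hμs)).1
  filter_upwards [hup, hlow] with ω h1 h2
  exact abs_le.2 ⟨h2, h1⟩

theorem exists_Linfty_integral_mul_eq (F : StrongDual ℝ (Lp ℝ 1 μ)) :
    ∃ g : Lp ℝ ∞ μ, ∀ f : Lp ℝ 1 μ, F f = ∫ ω, f ω * g ω ∂μ := by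
  -- Riesz on `L²` gives the density `y`; testing `F` on indicators bounds `|y|` by `‖F‖`, and
  -- density of `L²` in `L¹` extends the formula to all of `L¹`.
  set y : Lp ℝ 2 μ := (InnerProductSpace.toDual ℝ (Lp ℝ 2 μ)).symm (F ∘L L2ToL1 μ)
  have hFy : ∀ f : Lp ℝ 2 μ, F (L2ToL1 μ f) = ∫ ω, f ω * y ω ∂μ := fun f => by
    rw [← ContinuousLinearMap.comp_apply, ← InnerProductSpace.toDual_symm_apply, L2.inner_def]
    simp [y]
  have hy : ∀ᵐ ω ∂μ, |y ω| ≤ ‖F‖ := by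
    refine ae_abs_le_of_abs_setIntegral_le ((Lp.memLp y).integrable one_le_two) fun s hs hμs => ?_
    have hind : L2ToL1 μ (indicatorConstLp 2 hs hμs.ne (1 : ℝ)) = indicatorConstLp 1 hs hμs.ne 1 :=
      rfl
    rw [← L2.inner_indicatorConstLp_one hs hμs.ne y, real_inner_comm,
      InnerProductSpace.toDual_symm_apply, ContinuousLinearMap.comp_apply, hind]
    simpa [norm_indicatorConstLp] using F.le_opNorm (indicatorConstLp 1 hs hμs.ne (1 : ℝ))
  have hg := memLp_top_of_bound (Lp.aestronglyMeasurable y) ‖F‖ hy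
  set G : StrongDual ℝ (Lp ℝ 1 μ) :=
    ((ContinuousLinearMap.mul ℝ ℝ).lpPairing μ 1 ∞).flip (hg.toLp y)
  have hG : ∀ f, G f = ∫ ω, f ω * hg.toLp y ω ∂μ := fun f =>
    ContinuousLinearMap.lpPairing_eq_integral _ f _
  refine ⟨hg.toLp y, fun f => ?_⟩
  rw [← hG, denseRange_L2ToL1.equalizer F.continuous G.continuous (funext fun f => ?_)]
  rw [Function.comp_apply, Function.comp_apply, hFy, hG]
  refine integral_congr_ae ?_
  filter_upwards [hg.coeFn_toLp] with ω hω
  rw [hω]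
  rfl

end L1Dual

section AeConvergence

variable {μ : Measure Ω} {E : Type*} [NormedAddCommGroup E]

lemma ae_tendsto_of_tsum_eLpNorm_sub_ne_top {f : ℕ → Ω → E} {g : Ω → E}
    (hf : ∀ n, AEStronglyMeasurable (f n) μ) (hg : AEStronglyMeasurable g μ)
    (h : ∑' n, eLpNorm (f n - g) 1 μ ≠ ∞) :
    ∀ᵐ ω ∂μ, Tendsto (fun n => f n ω) atTop (𝓝 (g ω)) := by
  have hmeas : ∀ n, AEMeasurable (fun ω => ‖f n ω - g ω‖ₑ) μ := fun n =>
    ((hf n).sub hg).enorm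
  simp_rw [eLpNorm_one_eq_lintegral_enorm, Pi.sub_apply, ← lintegral_tsum hmeas] at h
  filter_upwards [ae_lt_top' (AEMeasurable.tsum hmeas) h] with ω hω
  simpa only [tendsto_iff_edist_tendsto_0, edist_eq_enorm_sub] using
    ENNReal.tendsto_atTop_zero_of_tsum_ne_top hω.ne

lemma exists_seq_ae_tendsto_of_mem_closure {ι : Type*} [Fintype ι] {A : Set (ι → Lp E 1 μ)}
    {e : ι → Lp E 1 μ} (he : e ∈ closure A) :
    ∃ v : ℕ → ι → Lp E 1 μ, (∀ n, v n ∈ A) ∧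
      ∀ i, ∀ᵐ ω ∂μ, Tendsto (fun n => v n i ω) atTop (𝓝 (e i ω)) := by
  choose v hvA hve using fun n : ℕ =>
    EMetric.mem_closure_iff.1 he ((2 : ℝ≥0∞)⁻¹ ^ n) (ENNReal.pow_pos (by simp) n)
  have hsum : ∑' n, (2 : ℝ≥0∞)⁻¹ ^ n ≠ ∞ := by
    rw [ENNReal.tsum_geometric, ENNReal.one_sub_inv_two, inv_inv]
    exact ENNReal.ofNat_ne_top
  refine ⟨v, hvA, fun i => ae_tendsto_of_tsum_eLpNorm_sub_ne_top
    (fun n => Lp.aestronglyMeasurable _) (Lp.aestronglyMeasurable _)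
    (ne_top_of_le_ne_top hsum (ENNReal.tsum_le_tsum fun n => ?_))⟩
  rw [← Lp.edist_def, edist_comm]
  exact (edist_le_pi_edist _ _ i).trans (hve n).le

end AeConvergence

section WeakClosure

variable {μ : Measure Ω}

lemma continuous_pairing_wtop {P D : Set (Fin d → Ω →ₘ[μ] ℝ)} {Z : Fin d → Ω →ₘ[μ] ℝ}
    (hZ : Z ∈ D) : Continuous[wtop P D, _] fun X : P => pairing (X : Fin d → Ω →ₘ[μ] ℝ) Z := by
  let := wtop P D
  have h : Continuous fun (X : P) (Z : D) =>
      pairing (X : Fin d → Ω →ₘ[μ] ℝ) (Z : Fin d → Ω →ₘ[μ] ℝ) := continuous_induced_dom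
  exact (continuous_apply (⟨Z, hZ⟩ : D)).comp h

lemma Linfty_mem_kdual {L : Set (Ω →ₘ[μ] ℝ)} (hL : ∀ f ∈ L, Integrable f μ) (g : Lp ℝ ∞ μ) :
    (g : Ω →ₘ[μ] ℝ) ∈ kdual L := fun f hf =>
  (hL f hf).mul_of_top_left (Lp.memLp g)

variable [IsFiniteMeasure μ]

lemma exists_Linfty_pairing_eq (f : StrongDual ℝ (Fin d → Lp ℝ 1 μ)) :
    ∃ g : Fin d → Lp ℝ ∞ μ, ∀ v : Fin d → Lp ℝ 1 μ,
      f v = pairing (fun i => (v i : Ω →ₘ[μ] ℝ)) (fun i => (g i : Ω →ₘ[μ] ℝ)) := by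
  classical
  choose g hg using fun i =>
    exists_Linfty_integral_mul_eq (f ∘L ContinuousLinearMap.single ℝ (fun _ => Lp ℝ 1 μ) i)
  refine ⟨g, fun v => ?_⟩
  conv_lhs => rw [← Finset.univ_sum_single v, map_sum]
  exact Finset.sum_congr rfl fun i _ => hg i (v i)

theorem exists_seq_ae_tendsto_of_mem_closure_wtop {Li : Fin d → Set (Ω →ₘ[μ] ℝ)}
    (hL : ∀ i, ∀ f ∈ Li i, Integrable f μ) {T : Set (Fin d → Ω →ₘ[μ] ℝ)} (hT : Convex ℝ T)
    {X₀ : prodSet Li}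
    (hX₀ : X₀ ∈ closure[wtop (prodSet Li) (prodSet fun i => kdual (Li i))] {X | ↑X ∈ T}) :
    ∃ X : ℕ → Fin d → Ω →ₘ[μ] ℝ, (∀ n, X n ∈ T) ∧
      ∀ i, ∀ᵐ ω ∂μ, Tendsto (fun n => X n i ω) atTop (𝓝 ((X₀ : Fin d → Ω →ₘ[μ] ℝ) i ω)) := by
  let := wtop (prodSet Li) (prodSet fun i => kdual (Li i))
  have hL1 : ∀ i, ∀ f ∈ Li i, f ∈ Lp ℝ 1 μ := fun i f hf =>
    Lp.mem_Lp_iff_memLp.2 (memLp_one_iff_integrable.2 (hL i f hf))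
  let T₁ : Set (Fin d → Lp ℝ 1 μ) := {v | (fun i => (v i : Ω →ₘ[μ] ℝ)) ∈ T}
  have hT₁ : Convex ℝ T₁ := fun v hv w hw a b ha hb hab => hT hv hw ha hb hab
  let toL1 (X : prodSet Li) : Fin d → Lp ℝ 1 μ := fun i => ⟨X.1 i, hL1 i _ (X.2 i)⟩
  have he₀ : toL1 X₀ ∈ closure T₁ := by
    by_contra hX₀T
    obtain ⟨f, u, hfX₀, hfT⟩ := geometric_hahn_banach_point_closed hT₁.closure isClosed_closure hX₀T
    obtain ⟨g, hfg⟩ := exists_Linfty_pairing_eq f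
    have hU : IsOpen {X : prodSet Li | pairing (X : Fin d → Ω →ₘ[μ] ℝ) (fun i => g i) < u} :=
      isOpen_lt (continuous_pairing_wtop fun i => Linfty_mem_kdual (hL i) (g i))
        continuous_const
    obtain ⟨Y, hYu, hYT⟩ := mem_closure_iff.1 hX₀ _ hU (by rwa [hfg] at hfX₀)
    exact (hfT (toL1 Y) (subset_closure hYT)).not_gt (hfg (toL1 Y) ▸ hYu)
  obtain ⟨v, hvT, hv⟩ := exists_seq_ae_tendsto_of_mem_closure he₀
  exact ⟨fun n i => v n i, hvT, hv⟩

end WeakClosure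

section Truncation

lemma tendsto_of_forall_le_of_limsup_le {u : ℕ → ℝ} {l b : ℝ} (hl : ∀ n, l ≤ u n)
    (hb : ∀ n, u n ≤ b) (h : limsup u atTop ≤ l) : Tendsto u atTop (𝓝 l) :=
  have hbdd : IsBoundedUnder (· ≤ ·) atTop u := isBoundedUnder_of ⟨b, hb⟩
  tendsto_of_le_liminf_of_limsup_le (le_liminf_of_le hbdd.isCoboundedUnder_ge (.of_forall hl)) h
    hbdd (isBoundedUnder_of ⟨l, hl⟩)

lemma tendsto_sup_inf_zero {x : ℕ → ℝ} {x₀ : ℝ} (h : Tendsto x atTop (𝓝 x₀)) :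
    Tendsto (fun n => x n ⊓ 0 ⊔ x₀ ⊓ 0) atTop (𝓝 (x₀ ⊓ 0)) := by
  simpa using (h.inf_nhds (tendsto_const_nhds (x := 0))).sup_nhds
    (tendsto_const_nhds (x := x₀ ⊓ 0))

lemma iSup_abs_sup_inf_zero {x : ℕ → ℝ} {x₀ : ℝ} (h : Tendsto x atTop (𝓝 x₀)) :
    BddAbove (range fun n => |x n ⊓ 0 ⊔ x₀ ⊓ 0|) ∧ -(x₀ ⊓ 0) = ⨆ n, |x n ⊓ 0 ⊔ x₀ ⊓ 0| := by
  have hle : ∀ n, |x n ⊓ 0 ⊔ x₀ ⊓ 0| ≤ -(x₀ ⊓ 0) := fun n => by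
    rw [abs_of_nonpos (sup_le inf_le_right inf_le_right)]
    exact neg_le_neg le_sup_right
  have htend : Tendsto (fun n => |x n ⊓ 0 ⊔ x₀ ⊓ 0|) atTop (𝓝 (-(x₀ ⊓ 0))) := by
    simpa [abs_of_nonpos (inf_le_right : x₀ ⊓ 0 ≤ 0)] using (tendsto_sup_inf_zero h).abs
  exact ⟨⟨_, forall_mem_range.2 hle⟩, (ciSup_eq_of_forall_le_of_forall_lt_exists_gt hle
    fun w hw => (htend.eventually (lt_mem_nhds hw)).exists).symm⟩

variable {μ : Measure Ω}

lemma ae_coeFn_sup_inf_zero (f g : Ω →ₘ[μ] ℝ) :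
    ∀ᵐ ω ∂μ, (f ⊓ 0 ⊔ g ⊓ 0) ω = f ω ⊓ 0 ⊔ g ω ⊓ 0 ∧ (g ⊓ 0) ω = g ω ⊓ 0 := by
  filter_upwards [AEEqFun.coeFn_sup (f ⊓ 0) (g ⊓ 0), AEEqFun.coeFn_inf f 0, AEEqFun.coeFn_inf g 0,
    AEEqFun.coeFn_zero (β := ℝ) (μ := μ)] with ω h1 h2 h3 h4
  simp [h1, h2, h3, h4]

variable {f : ℕ → Ω →ₘ[μ] ℝ} {f₀ : Ω →ₘ[μ] ℝ}

lemma ae_tendsto_sup_inf_zero (hf : ∀ᵐ ω ∂μ, Tendsto (fun n => f n ω) atTop (𝓝 (f₀ ω))) :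
    ∀ᵐ ω ∂μ, Tendsto (fun n => (f n ⊓ 0 ⊔ f₀ ⊓ 0) ω) atTop (𝓝 ((f₀ ⊓ 0) ω)) := by
  filter_upwards [hf, ae_all_iff.2 fun n => ae_coeFn_sup_inf_zero (f n) f₀] with ω hω heq
  simp only [heq, (heq 0).2]
  exact tendsto_sup_inf_zero hω

lemma supAbsMem_sup_inf_zero {L : Set (Ω →ₘ[μ] ℝ)} (hL : -(f₀ ⊓ 0) ∈ L)
    (hf : ∀ᵐ ω ∂μ, Tendsto (fun n => f n ω) atTop (𝓝 (f₀ ω))) :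
    supAbsMem L fun n => f n ⊓ 0 ⊔ f₀ ⊓ 0 := by
  refine ⟨_, hL, ?_⟩
  filter_upwards [hf, ae_all_iff.2 fun n => ae_coeFn_sup_inf_zero (f n) f₀,
    AEEqFun.coeFn_neg (f₀ ⊓ 0)] with ω hω heq hneg
  simp only [heq, hneg, Pi.neg_apply, (heq 0).2]
  exact iSup_abs_sup_inf_zero hω

end Truncation

section Pairing

variable {μ : Measure Ω} {W : Ω →ₘ[μ] ℝ}

lemma ae_nonneg_of_nonneg (hW : 0 ≤ W) : ∀ᵐ ω ∂μ, 0 ≤ W ω := by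
  filter_upwards [AEEqFun.coeFn_le.2 hW, AEEqFun.coeFn_zero (β := ℝ) (μ := μ)] with ω h h0
  simpa [h0] using h

lemma ip_mono_left {U V : Ω →ₘ[μ] ℝ} (hW : 0 ≤ W) (hU : Integrable (fun ω => U ω * W ω) μ)
    (hV : Integrable (fun ω => V ω * W ω) μ) (hUV : U ≤ V) : ip U W ≤ ip V W :=
  integral_mono_ae hU hV <| by
    filter_upwards [AEEqFun.coeFn_le.2 hUV, ae_nonneg_of_nonneg hW] with ω h hWω
    exact mul_le_mul_of_nonneg_right h hWω

lemma coeFn_smul_add_smul_mul (U V : Ω →ₘ[μ] ℝ) (a b : ℝ) :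
    (fun ω => (a • U + b • V) ω * W ω) =ᵐ[μ] fun ω => a * (U ω * W ω) + b * (V ω * W ω) := by
  filter_upwards [AEEqFun.coeFn_add (a • U) (b • V), AEEqFun.coeFn_smul a U,
    AEEqFun.coeFn_smul b V] with ω h1 h2 h3
  simp only [h1, Pi.add_apply, h2, h3, Pi.smul_apply, smul_eq_mul]
  ring

lemma ip_smul_add_smul {U V : Ω →ₘ[μ] ℝ} (hU : Integrable (fun ω => U ω * W ω) μ)
    (hV : Integrable (fun ω => V ω * W ω) μ) (a b : ℝ) :
    ip (a • U + b • V) W = a * ip U W + b * ip V W := by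
  rw [ip, ip, ip, integral_congr_ae (coeFn_smul_add_smul_mul U V a b),
    integral_add (hU.const_mul a) (hV.const_mul b), integral_const_mul, integral_const_mul]

lemma concaveOn_ip_left {E : Type*} [AddCommGroup E] [Module ℝ E] {s : Set E}
    {F : E → Ω →ₘ[μ] ℝ} (hF : ConcaveOn ℝ s F) (hW : 0 ≤ W)
    (hint : ∀ x ∈ s, Integrable (fun ω => F x ω * W ω) μ) :
    ConcaveOn ℝ s fun x => ip (F x) W := by
  refine ⟨hF.1, fun x hx y hy a b ha hb hab => ?_⟩
  have hxy := hF.1 hx hy ha hb hab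
  have hint_comb : Integrable (fun ω => (a • F x + b • F y) ω * W ω) μ :=
    ((hint x hx).const_mul a |>.add ((hint y hy).const_mul b)).congr
      (coeFn_smul_add_smul_mul _ _ a b).symm
  rw [smul_eq_mul, smul_eq_mul, ← ip_smul_add_smul (hint x hx) (hint y hy)]
  exact ip_mono_left hW hint_comb (hint _ hxy) (hF.2 hx hy ha hb hab)

lemma tendsto_ip_of_limsup_le {U : ℕ → Ω →ₘ[μ] ℝ} {L B : Ω →ₘ[μ] ℝ} (hW : 0 ≤ W)
    (hL : Integrable (fun ω => L ω * W ω) μ) (hB : Integrable (fun ω => B ω * W ω) μ)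
    (hLU : ∀ n, L ≤ U n) (hUB : ∀ n, U n ≤ B)
    (hlim : ∀ᵐ ω ∂μ, limsup (fun n => U n ω) atTop ≤ L ω) :
    Tendsto (fun n => ip (U n) W) atTop (𝓝 (ip L W)) := by
  have hLU' : ∀ᵐ ω ∂μ, ∀ n, L ω ≤ U n ω := ae_all_iff.2 fun n => AEEqFun.coeFn_le.2 (hLU n)
  have hUB' : ∀ᵐ ω ∂μ, ∀ n, U n ω ≤ B ω := ae_all_iff.2 fun n => AEEqFun.coeFn_le.2 (hUB n)
  refine tendsto_integral_of_dominated_convergence (fun ω => |L ω * W ω| + |B ω * W ω|)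
    (fun n => (U n).aestronglyMeasurable.mul W.aestronglyMeasurable) (hL.abs.add hB.abs)
    (fun n => ?_) ?_
  · filter_upwards [hLU', hUB', ae_nonneg_of_nonneg hW] with ω hl hu hWω
    exact (abs_le_max_abs_abs (mul_le_mul_of_nonneg_right (hl n) hWω)
      (mul_le_mul_of_nonneg_right (hu n) hWω)).trans (max_le_add_of_nonneg (abs_nonneg _)
      (abs_nonneg _))
  · filter_upwards [hLU', hUB', hlim] with ω hl hu hω
    exact (tendsto_of_forall_le_of_limsup_le hl hu hω).mul_const _

end Pairing

section Admissible

variable {μ : Measure Ω} {Li : Fin d → Set (Ω →ₘ[μ] ℝ)} {nrmX : Fin d → (Ω →ₘ[μ] ℝ) → ℝ}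

lemma convex_prodSet (hLi : ∀ i, IsAdmissible (Li i) (nrmX i)) : Convex ℝ (prodSet Li) :=
  fun _ hX _ hY a b _ _ _ i =>
    (hLi i).add_mem _ ((hLi i).smul_mem a _ (hX i)) _ ((hLi i).smul_mem b _ (hY i))

lemma inf_zero_mem_prodSet (hLi : ∀ i, IsAdmissible (Li i) (nrmX i))
    {X : Fin d → Ω →ₘ[μ] ℝ} (hX : X ∈ prodSet Li) : X ⊓ 0 ∈ prodSet Li :=
  fun i => (hLi i).inf_mem _ (hX i) _ (hLi i).zero_mem

lemma concaveOn_prodSet {β : Type*} [AddCommMonoid β] [PartialOrder β] [Module ℝ β]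
    (hLi : ∀ i, IsAdmissible (Li i) (nrmX i)) {S : (Fin d → Ω →ₘ[μ] ℝ) → β}
    (hconc : ∀ X ∈ prodSet Li, ∀ Y ∈ prodSet Li, ∀ t : ℝ, 0 ≤ t → t ≤ 1 →
      t • S X + (1 - t) • S Y ≤ S (t • X + (1 - t) • Y)) :
    ConcaveOn ℝ (prodSet Li) S := by
  refine ⟨convex_prodSet hLi, fun X hX Y hY a b ha hb hab => ?_⟩
  obtain rfl : b = 1 - a := by linarith
  exact hconc X hX Y hY a ha (by linarith)

end Admissible

theorem statement1_general {μ : Measure Ω} [IsProbabilityMeasure μ] {d : ℕ}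
    (Li : Fin d → Set (Ω →ₘ[μ] ℝ)) (nrmX : Fin d → ((Ω →ₘ[μ] ℝ) → ℝ))
    (EE : Set (Ω →ₘ[μ] ℝ))
    (hLi : ∀ i, IsAdmissible (Li i) (nrmX i))
    (S : (Fin d → (Ω →ₘ[μ] ℝ)) → (Ω →ₘ[μ] ℝ))
    (hmap : ∀ X ∈ prodSet Li, S X ∈ EE)
    (hmono : ∀ X ∈ prodSet Li, ∀ Y ∈ prodSet Li, X ≤ Y → S X ≤ S Y)
    (hconc : ∀ X ∈ prodSet Li, ∀ Y ∈ prodSet Li, ∀ t : ℝ, 0 ≤ t → t ≤ 1 →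
      t • S X + (1 - t) • S Y ≤ S (t • X + (1 - t) • Y))
    -- surplus invariance : `S(X) = S(min(X,0))` (componentwise minimum)
    (hsurplus : ∀ X ∈ prodSet Li, S X = S (X ⊓ 0))
    -- Fatou property
    (hfatou : ∀ (u : ℕ → (Fin d → (Ω →ₘ[μ] ℝ))) (X : Fin d → (Ω →ₘ[μ] ℝ)),
      (∀ n, u n ∈ prodSet Li) → X ∈ prodSet Li →
      (∀ i, ∀ᵐ ω ∂μ, Tendsto (fun n => u n i ω) atTop (nhds (X i ω))) →
      (∀ i, supAbsMem (Li i) (fun n => u n i)) →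
      ∀ᵐ ω ∂μ, limsup (fun n => S (u n) ω) atTop ≤ S X ω) :
    ∀ W ∈ kdual EE, (0 : Ω →ₘ[μ] ℝ) ≤ W →
      @UpperSemicontinuous (↥(prodSet Li)) ℝ (wtop (prodSet Li) (prodSet fun i => kdual (Li i))) _
        (fun X : ↥(prodSet Li) => ∫ ω, S (X : Fin d → (Ω →ₘ[μ] ℝ)) ω * W ω ∂μ) := by
  intro W hW hW0
  let := wtop (prodSet Li) (prodSet fun i => kdual (Li i))
  have hint : ∀ X ∈ prodSet Li, Integrable (fun ω => S X ω * W ω) μ := fun X hX => hW _ (hmap X hX)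
  refine upperSemicontinuous_iff_isClosed_preimage.2 fun c =>
    closure_subset_iff_isClosed.1 fun X₀ hX₀ => ?_
  obtain ⟨X, hXT, hX⟩ := exists_seq_ae_tendsto_of_mem_closure_wtop (fun i => (hLi i).subset_lone)
    ((concaveOn_ip_left (concaveOn_prodSet hLi hconc) hW0 hint).convex_ge c)
    (closure_mono (fun Y hY => show _ ∧ _ from ⟨Y.2, hY⟩) hX₀)
  have hX₀0 := inf_zero_mem_prodSet hLi X₀.2
  have h0 : (0 : Fin d → Ω →ₘ[μ] ℝ) ∈ prodSet Li := fun i => (hLi i).zero_mem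
  let Z n := X n ⊓ 0 ⊔ (X₀ : Fin d → Ω →ₘ[μ] ℝ) ⊓ 0
  have hZ n : Z n ∈ prodSet Li := fun i =>
    (hLi i).sup_mem _ (inf_zero_mem_prodSet hLi (hXT n).1 i) _ (hX₀0 i)
  have hcZ n : c ≤ ip (S (Z n)) W := calc
    c ≤ ip (S (X n)) W := (hXT n).2
    _ = ip (S (X n ⊓ 0)) W := by rw [← hsurplus _ (hXT n).1]
    _ ≤ ip (S (Z n)) W := ip_mono_left hW0 (hint _ (inf_zero_mem_prodSet hLi (hXT n).1))
      (hint _ (hZ n)) (hmono _ (inf_zero_mem_prodSet hLi (hXT n).1) _ (hZ n) le_sup_left)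
  have hfatZ := hfatou Z _ hZ hX₀0 (fun i => ae_tendsto_sup_inf_zero (hX i)) fun i =>
    supAbsMem_sup_inf_zero (by simpa using (hLi i).smul_mem (-1) _ (hX₀0 i)) (hX i)
  have hlim := tendsto_ip_of_limsup_le hW0 (hint _ hX₀0) (hint 0 h0)
    (fun n => hmono _ hX₀0 _ (hZ n) le_sup_right)
    (fun n => hmono _ (hZ n) 0 h0 (sup_le inf_le_right inf_le_right)) hfatZ
  show c ≤ ip (S X₀) W
  rw [hsurplus _ X₀.2]
  exact ge_of_tendsto hlim (.of_forall hcZ)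

/-- a monotone, concave, surplus-invariant impact map with the Fatou property
induces `σ(X,X')`-upper semicontinuous functionals `X ↦ E[S(X)W]` for all `W ∈ E'_+`. -/
theorem statement1 {μ : Measure Ω} [IsProbabilityMeasure μ] {d : ℕ}
    (Li : Fin d → Set (Ω →ₘ[μ] ℝ)) (nrmX : Fin d → ((Ω →ₘ[μ] ℝ) → ℝ))
    (EE : Set (Ω →ₘ[μ] ℝ)) (nrmE : (Ω →ₘ[μ] ℝ) → ℝ)
    (hLi : ∀ i, IsAdmissible (Li i) (nrmX i))
    (hE : IsAdmissible EE nrmE)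
    (S : (Fin d → (Ω →ₘ[μ] ℝ)) → (Ω →ₘ[μ] ℝ))
    (hmap : ∀ X ∈ prodSet Li, S X ∈ EE)
    (hmono : ∀ X ∈ prodSet Li, ∀ Y ∈ prodSet Li, X ≤ Y → S X ≤ S Y)
    (hconc : ∀ X ∈ prodSet Li, ∀ Y ∈ prodSet Li, ∀ t : ℝ, 0 ≤ t → t ≤ 1 →
      t • S X + (1 - t) • S Y ≤ S (t • X + (1 - t) • Y))
    -- surplus invariance : `S(X) = S(min(X,0))` (componentwise minimum)
    (hsurplus : ∀ X ∈ prodSet Li, S X = S (X ⊓ 0))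
    -- Fatou property
    (hfatou : ∀ (u : ℕ → (Fin d → (Ω →ₘ[μ] ℝ))) (X : Fin d → (Ω →ₘ[μ] ℝ)),
      (∀ n, u n ∈ prodSet Li) → X ∈ prodSet Li →
      (∀ i, ∀ᵐ ω ∂μ, Tendsto (fun n => u n i ω) atTop (nhds (X i ω))) →
      (∀ i, supAbsMem (Li i) (fun n => u n i)) →
      ∀ᵐ ω ∂μ, limsup (fun n => S (u n) ω) atTop ≤ S X ω) :
    ∀ W ∈ kdual EE, (0 : Ω →ₘ[μ] ℝ) ≤ W →
      @UpperSemicontinuous (↥(prodSet Li)) ℝ (wtop (prodSet Li) (prodSet fun i => kdual (Li i))) _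
        (fun X : ↥(prodSet Li) => ∫ ω, S (X : Fin d → (Ω →ₘ[μ] ℝ)) ω * W ω ∂μ) :=
  statement1_general Li nrmX EE hLi S hmap hmono hconc hsurplus hfatou

end SystemicRisk
end
end

section
/- Let S : X → E be an admissible impact map, A ⊂ E an admissible acceptance set, and ρ(X) = inf{Σ_{i=1}^d m_i : m ∈ ℝ^d, S(X+m) ∈ A}. If ρ is σ(X,X')-lower semicontinuous, then ρ is proper (i.e. ρ never attains the value −∞ and ρ is finite at some point) if and only if ρ(0) > −∞. -/
open MeasureTheory Filter Set
open scoped ENNReal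

noncomputable section

namespace SystemicRisk

variable {Ω : Type*} [MeasurableSpace Ω]

variable {d : ℕ}

/-!
If `ρ X = ⊥`, then since `S⁻¹(A)` is star-shaped about `0`, every acceptable allocation `m` of `X`
yields the acceptable allocation `t • m` of `t • X`, so `ρ (t • X) = ⊥` for all `t ∈ (0, 1]`.
As `t ↓ 0`, `t • X → 0` in `σ(X, X')`, and lower semicontinuity gives `ρ 0 = ⊥`. Finiteness
somewhere is automatic: `ρ ≤ 0` on the nonempty set `S⁻¹(A)`.
-/

open Topology

theorem _root_.LowerSemicontinuous.eq_bot_of_tendsto {α β γ : Type*} [TopologicalSpace α]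
    [PartialOrder β] [OrderBot β] {f : α → β} (hf : LowerSemicontinuous f) {l : Filter γ}
    [l.NeBot] {g : γ → α} {x : α} (hg : Tendsto g l (𝓝 x)) (hbot : ∀ᶠ b in l, f (g b) = ⊥) :
    f x = ⊥ := by
  by_contra hx
  obtain ⟨b, hb, hb_bot⟩ := ((hg.eventually (hf x ⊥ (bot_lt_iff_ne_bot.2 hx))).and hbot).exists
  exact hb.ne' hb_bot

variable {μ : Measure Ω} {d : ℕ}

theorem _root_.MeasureTheory.AEEqFun.sub_nonneg_of_le {f g : Ω →ₘ[μ] ℝ} (h : f ≤ g) :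
    0 ≤ g - f := by
  rw [← AEEqFun.coeFn_le] at h ⊢
  filter_upwards [AEEqFun.coeFn_sub g f, AEEqFun.coeFn_zero (β := ℝ) (μ := μ), h]
    with ω h_sub h_zero h_le
  simpa [h_sub, h_zero] using h_le

theorem cvec_zero : cvec μ (0 : Fin d → ℝ) = 0 :=
  funext fun _ => AEEqFun.zero_def.symm

theorem cvec_smul (t : ℝ) (m : Fin d → ℝ) : cvec μ (t • m) = t • cvec μ m :=
  funext fun _ => (AEEqFun.smul_mk _ _ _).symm

theorem ip_smul_left (t : ℝ) (f g : Ω →ₘ[μ] ℝ) : ip (t • f) g = t * ip f g := by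
  rw [ip, ip, ← integral_const_mul]
  refine integral_congr_ae ?_
  filter_upwards [AEEqFun.coeFn_smul t f] with ω h
  simp [h, mul_assoc]

theorem pairing_smul_left (t : ℝ) (X Z : Fin d → (Ω →ₘ[μ] ℝ)) :
    pairing (t • X) Z = t * pairing X Z := by
  simp only [pairing, Pi.smul_apply, ip_smul_left, Finset.mul_sum]

theorem continuous_smul_wtop {P D : Set (Fin d → (Ω →ₘ[μ] ℝ))} (X : Fin d → (Ω →ₘ[μ] ℝ))
    (hX : ∀ t : ℝ, t • X ∈ P) :
    Continuous[_, wtop P D] fun t : ℝ => (⟨t • X, hX t⟩ : P) :=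
  continuous_induced_rng.2 <| continuous_pi fun Z => by
    show Continuous fun t : ℝ => pairing (t • X) (Z : Fin d → (Ω →ₘ[μ] ℝ))
    simp only [pairing_smul_left]
    exact continuous_id.mul continuous_const

section Acceptance

variable {XX XX' : Set (Fin d → (Ω →ₘ[μ] ℝ))} {EE EE' : Set (Ω →ₘ[μ] ℝ)}
  {S : (Fin d → (Ω →ₘ[μ] ℝ)) → (Ω →ₘ[μ] ℝ)} {A : Set (Ω →ₘ[μ] ℝ)}

/-- Concavity and `S 0 = 0` give `t • S Y ≤ S (t • Y)`, and `t • S Y ∈ A` by convexity and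
`0 ∈ A`; monotonicity of `A` closes the gap. -/
theorem starConvex_sysAcc {nrmE : (Ω →ₘ[μ] ℝ) → ℝ} (hXX : ∀ c : ℝ, ∀ Y ∈ XX, c • Y ∈ XX)
    (hE : IsAdmissible EE nrmE) (hS : IsAdmissibleImpact XX XX' EE EE' S)
    (hA : IsAdmissibleAcceptance XX EE EE' S A) : StarConvex ℝ 0 (sysAcc XX S A) := by
  refine starConvex_zero_iff.2 fun Y ⟨hY, hSY⟩ t ht0 ht1 => ⟨hXX t Y hY, ?_⟩
  have h0 : (0 : Fin d → (Ω →ₘ[μ] ℝ)) ∈ XX := by simpa using hXX 0 Y hY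
  have hconc : t • S Y ≤ S (t • Y) := by
    simpa [hS.normalized] using hS.concave Y hY 0 h0 t ht0 ht1
  have htSY : t • S Y ∈ A := by simpa using hA.convex _ hSY _ hA.zero_mem t ht0 ht1
  have hgap : S (t • Y) - t • S Y ∈ EE := by
    rw [sub_eq_add_neg, ← neg_smul]
    exact hE.add_mem _ (hS.mapsTo _ (hXX t Y hY)) _ (hE.smul_mem _ _ (hS.mapsTo Y hY))
  simpa using hA.mono _ htSY _ hgap (AEEqFun.sub_nonneg_of_le hconc)

theorem rho_le {X : Fin d → (Ω →ₘ[μ] ℝ)} {m : Fin d → ℝ} (hm : S (X + cvec μ m) ∈ A) :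
    rho μ S A X ≤ ((∑ i, m i : ℝ) : EReal) :=
  iInf₂_le m hm

theorem rho_ne_top {X : Fin d → (Ω →ₘ[μ] ℝ)} (hX : S X ∈ A) : rho μ S A X ≠ ⊤ :=
  ne_top_of_le_ne_top (EReal.coe_ne_top _) (rho_le (m := 0) (by rwa [cvec_zero, add_zero]))

theorem rho_eq_bot_iff {X : Fin d → (Ω →ₘ[μ] ℝ)} :
    rho μ S A X = ⊥ ↔ ∀ c : ℝ, ∃ m, S (X + cvec μ m) ∈ A ∧ ∑ i, m i < c := by
  simp only [EReal.eq_bot_iff_forall_lt, rho, iInf_lt_iff, mem_ofPred_eq, EReal.coe_lt_coe_iff,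
    exists_prop]

end Acceptance

variable {Li : Fin d → Set (Ω →ₘ[μ] ℝ)} {nrmX : Fin d → ((Ω →ₘ[μ] ℝ) → ℝ)}

theorem smul_mem_prodSet (hLi : ∀ i, IsAdmissible (Li i) (nrmX i)) (t : ℝ) :
    ∀ X ∈ prodSet Li, t • X ∈ prodSet Li :=
  fun _ hX i => (hLi i).smul_mem t _ (hX i)

theorem add_cvec_mem_prodSet (hLi : ∀ i, IsAdmissible (Li i) (nrmX i))
    {X : Fin d → (Ω →ₘ[μ] ℝ)} (hX : X ∈ prodSet Li) (m : Fin d → ℝ) :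
    X + cvec μ m ∈ prodSet Li := fun i =>
  (hLi i).add_mem _ (hX i) _ <| (hLi i).linfty_subset _ ⟨|m i|, by
    filter_upwards [AEEqFun.coeFn_const (μ := μ) Ω (m i)] with ω h
    simp [cvec, h]⟩

theorem rho_smul_eq_bot {EE : Set (Ω →ₘ[μ] ℝ)} {nrmE : (Ω →ₘ[μ] ℝ) → ℝ}
    {S : (Fin d → (Ω →ₘ[μ] ℝ)) → (Ω →ₘ[μ] ℝ)} {A : Set (Ω →ₘ[μ] ℝ)}
    (hLi : ∀ i, IsAdmissible (Li i) (nrmX i)) (hE : IsAdmissible EE nrmE)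
    (hS : IsAdmissibleImpact (prodSet Li) (prodSet fun i => kdual (Li i)) EE (kdual EE) S)
    (hA : IsAdmissibleAcceptance (prodSet Li) EE (kdual EE) S A)
    {X : Fin d → (Ω →ₘ[μ] ℝ)} (hX : X ∈ prodSet Li) (hρ : rho μ S A X = ⊥)
    {t : ℝ} (ht0 : 0 < t) (ht1 : t ≤ 1) : rho μ S A (t • X) = ⊥ := by
  refine rho_eq_bot_iff.2 fun c => ?_
  obtain ⟨m, hm, hm_sum⟩ := rho_eq_bot_iff.1 hρ (c / t)
  have hmem : t • (X + cvec μ m) ∈ sysAcc (prodSet Li) S A :=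
    (starConvex_sysAcc (smul_mem_prodSet hLi) hE hS hA).smul_mem
      ⟨add_cvec_mem_prodSet hLi hX m, hm⟩ ht0.le ht1
  refine ⟨t • m, by simpa [smul_add, cvec_smul] using hmem.2, ?_⟩
  simpa [← Finset.sum_mul, mul_comm t] using (lt_div_iff₀ ht0).1 hm_sum

theorem statement3_general {μ : Measure Ω} {d : ℕ}
    (Li : Fin d → Set (Ω →ₘ[μ] ℝ)) (nrmX : Fin d → ((Ω →ₘ[μ] ℝ) → ℝ))
    (EE : Set (Ω →ₘ[μ] ℝ)) (nrmE : (Ω →ₘ[μ] ℝ) → ℝ)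
    (S : (Fin d → (Ω →ₘ[μ] ℝ)) → (Ω →ₘ[μ] ℝ)) (A : Set (Ω →ₘ[μ] ℝ))
    (hLi : ∀ i, IsAdmissible (Li i) (nrmX i))
    (hE : IsAdmissible EE nrmE)
    (hS : IsAdmissibleImpact (prodSet Li) (prodSet fun i => kdual (Li i)) EE (kdual EE) S)
    (hA : IsAdmissibleAcceptance (prodSet Li) EE (kdual EE) S A)
    (hlsc : @LowerSemicontinuous (↥(prodSet Li)) EReal
        (wtop (prodSet Li) (prodSet fun i => kdual (Li i))) _
        (fun X : ↥(prodSet Li) => rho μ S A (X : Fin d → (Ω →ₘ[μ] ℝ)))) :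
    ProperOn (prodSet Li) (rho μ S A) ↔ ⊥ < rho μ S A 0 := by
  have h0 : (0 : Fin d → (Ω →ₘ[μ] ℝ)) ∈ prodSet Li := fun i => (hLi i).zero_mem
  refine ⟨fun hρ => bot_lt_iff_ne_bot.2 (hρ.1 0 h0), fun hρ0 => ⟨fun X hX hX_bot => ?_, ?_⟩⟩
  · let _ := wtop (prodSet Li) (prodSet fun i => kdual (Li i))
    have hγ := ((continuous_smul_wtop X fun t => smul_mem_prodSet hLi t X hX).tendsto 0).mono_left
      (nhdsWithin_le_nhds (s := Ioi 0))
    have hρ_bot : ∀ᶠ t in 𝓝[>] (0 : ℝ), rho μ S A (t • X) = ⊥ := by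
      filter_upwards [Ioo_mem_nhdsGT one_pos] with t ht
      exact rho_smul_eq_bot hLi hE hS hA hX hX_bot ht.1 ht.2.le
    have hρ0_bot : rho μ S A 0 = ⊥ := by simpa using hlsc.eq_bot_of_tendsto hγ hρ_bot
    exact hρ0.ne' hρ0_bot
  · obtain ⟨X, hX, hSX⟩ := hA.preimage_nonempty
    exact ⟨X, hX, rho_ne_top hSX⟩

/-- if `ρ` is `σ(X,X')`-lower semicontinuous then it is proper iff `ρ(0) > −∞`. -/
theorem statement3 {μ : Measure Ω} [IsProbabilityMeasure μ] {d : ℕ}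
    (Li : Fin d → Set (Ω →ₘ[μ] ℝ)) (nrmX : Fin d → ((Ω →ₘ[μ] ℝ) → ℝ))
    (EE : Set (Ω →ₘ[μ] ℝ)) (nrmE : (Ω →ₘ[μ] ℝ) → ℝ)
    (S : (Fin d → (Ω →ₘ[μ] ℝ)) → (Ω →ₘ[μ] ℝ)) (A : Set (Ω →ₘ[μ] ℝ))
    (hLi : ∀ i, IsAdmissible (Li i) (nrmX i))
    (hE : IsAdmissible EE nrmE)
    (hS : IsAdmissibleImpact (prodSet Li) (prodSet fun i => kdual (Li i)) EE (kdual EE) S)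
    (hA : IsAdmissibleAcceptance (prodSet Li) EE (kdual EE) S A)
    (hlsc : @LowerSemicontinuous (↥(prodSet Li)) EReal
        (wtop (prodSet Li) (prodSet fun i => kdual (Li i))) _
        (fun X : ↥(prodSet Li) => rho μ S A (X : Fin d → (Ω →ₘ[μ] ℝ)))) :
    ProperOn (prodSet Li) (rho μ S A) ↔ ⊥ < rho μ S A 0 :=
  statement3_general Li nrmX EE nrmE S A hLi hE hS hA hlsc

end SystemicRisk
end
end
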